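/- Let p < q < r be primes, and let [v] denote, for an integer v, the unique u ∈ [0, q-1] such that there exists s ∈ ℤ with ([v]p + vq)r + q < i + 1 + spq ≤ ([v]p + vq)r + p + q (for a fixed integer i). Then for 0 ≤ u ≤ q-1: (a) χ_i(up + vq) = 1 if and only if u = [v]; (b) χ_i(up + vq) = -1 if and only if u = [v - r_p*], where r_p* is the inverse of r modulo p in [1, p-1]. -/

import Mathlib

/-!
Write `InWindowMod n L x c` for "`c` is congruent mod `n` to an element of `(x, x + L]`".
Then `χ_i(m) = 1` says that `i + 1` lies in the window of length `p` at `mr + q` modulo `pq`,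
and `χ_i(m) = -1` that it lies in the one at `mr`; these two windows are disjoint because
`p ≤ q` and `q + p ≤ pq`. For fixed `v`, the windows at `(up + vq)r`, `0 ≤ u < q`, are pairwise
disjoint modulo `pq`: if `c` lay in two of them, comparing offsets mod `p` would force
`(u - u')r ≡ 0 (mod q)`, hence `u = u'`. So `[v]` is the only `u` with `χ_i(up + vq) = 1`.
Finally `(up + (v - r_p*)q)r + q ≡ (up + vq)r (mod pq)` since `p ∣ 1 - r r_p*`, which turns
the defining property of `[v - r_p*]` into the condition for `χ_i(up + vq) = -1`.
-/

open Classical in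
/-- The function `χ_i(m)` associated to primes `p < q < r`. -/
noncomputable def chi (p q r : ℕ) (i m : ℤ) : ℤ :=
  if ∃ s : ℤ, m * r + q < i + 1 + s * p * q ∧ i + 1 + s * p * q ≤ m * r + q + p then 1
  else if ∃ s : ℤ, m * r < i + 1 + s * p * q ∧ i + 1 + s * p * q ≤ m * r + p then -1
  else 0

def InWindowMod (n L x c : ℤ) : Prop :=
  ∃ s : ℤ, x < c + s * n ∧ c + s * n ≤ x + L

namespace InWindowMod

variable {n L x c : ℤ}

theorem add_mul_iff (k : ℤ) : InWindowMod n L (x + k * n) c ↔ InWindowMod n L x c := by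
  constructor
  · rintro ⟨s, h₁, h₂⟩
    exact ⟨s - k, by linarith, by linarith⟩
  · rintro ⟨s, h₁, h₂⟩
    exact ⟨s + k, by linarith, by linarith⟩

theorem add_iff_sub (d : ℤ) : InWindowMod n L (x + d) c ↔ InWindowMod n L x (c - d) := by
  constructor
  · rintro ⟨s, h₁, h₂⟩
    exact ⟨s, by linarith, by linarith⟩
  · rintro ⟨s, h₁, h₂⟩
    exact ⟨s, by linarith, by linarith⟩

theorem not_and_add {d : ℤ} (hLd : L ≤ d) (hdn : d + L ≤ n) :
    ¬ (InWindowMod n L x c ∧ InWindowMod n L (x + d) c) := by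
  rintro ⟨⟨s, h₁, h₂⟩, ⟨s', h₁', h₂'⟩⟩
  have hn : 0 < n := by linarith
  have hpos : 0 < (s' - s) * n := by linarith
  have hlt : (s' - s) * n < n := by linarith
  have hk : 0 < s' - s := pos_of_mul_pos_left hpos hn.le
  nlinarith

theorem eq_of_mul_window {p q r c v u u' : ℤ} (hp : 0 < p) (hqr : IsCoprime q r)
    (hu : 0 ≤ u ∧ u < q) (hu' : 0 ≤ u' ∧ u' < q)
    (h : InWindowMod (p * q) p ((u * p + v * q) * r) c)
    (h' : InWindowMod (p * q) p ((u' * p + v * q) * r) c) : u = u' := by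
  obtain ⟨s, h₁, h₂⟩ := h
  obtain ⟨s', h₁', h₂'⟩ := h'
  -- both offsets `c + s pq - x` lie in `(0, p]` and differ by a multiple of `p`
  have hoffset : (s - s') * p * q - (u - u') * p * r = 0 := by
    refine Int.eq_zero_of_abs_lt_dvd (m := p) ⟨(s - s') * q - (u - u') * r, by ring⟩ ?_
    rw [abs_lt]
    constructor <;> linarith
  have hq_dvd : q ∣ (u - u') * r :=
    ⟨s - s', mul_right_cancel₀ hp.ne' (by linear_combination -hoffset)⟩
  have := Int.eq_zero_of_abs_lt_dvd (hqr.dvd_of_dvd_mul_right hq_dvd)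
    (by rw [abs_lt]; constructor <;> linarith)
  linarith

theorem mul_window_iff {p q r c v u u₀ : ℤ} (hp : 0 < p) (hqr : IsCoprime q r)
    (hu₀ : 0 ≤ u₀ ∧ u₀ < q) (h₀ : InWindowMod (p * q) p ((u₀ * p + v * q) * r) c)
    (hu : 0 ≤ u ∧ u < q) : InWindowMod (p * q) p ((u * p + v * q) * r) c ↔ u = u₀ :=
  ⟨fun h ↦ eq_of_mul_window hp hqr hu hu₀ h h₀, by rintro rfl; exact h₀⟩

end InWindowMod

theorem chi_eq_one_iff (p q r : ℕ) (i m : ℤ) :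
    chi p q r i m = 1 ↔ InWindowMod (p * q) p (m * r + q) (i + 1) := by
  simp only [InWindowMod, ← mul_assoc]
  unfold chi
  split_ifs with h₁ h₂ <;> simp_all

theorem chi_eq_neg_one_iff {p q : ℕ} (hp : 2 ≤ p) (hpq : p < q) (r : ℕ) (i m : ℤ) :
    chi p q r i m = -1 ↔ InWindowMod (p * q) p (m * r) (i + 1) := by
  have hdisj := InWindowMod.not_and_add (n := p * q) (L := p) (x := m * r) (c := i + 1)
    (d := q) (by exact_mod_cast hpq.le) (by norm_cast; nlinarith)
  simp only [InWindowMod, ← mul_assoc] at hdisj ⊢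
  unfold chi
  split_ifs with h₁ h₂ <;> simp_all

theorem stmt_10_general (p q r : ℕ) (hp : p.Prime) (hq : q.Prime) (hr : r.Prime)
    (hpq : p < q) (hqr : q < r) (i v : ℤ) (rs : ℕ)
    (hrs : r * rs ≡ 1 [MOD p])
    (u₀ u₁ : ℤ)
    (hu₀ : 0 ≤ u₀ ∧ u₀ ≤ q - 1 ∧ ∃ s : ℤ,
      (u₀ * p + v * q) * r + q < i + 1 + s * p * q ∧
      i + 1 + s * p * q ≤ (u₀ * p + v * q) * r + p + q)
    (hu₁ : 0 ≤ u₁ ∧ u₁ ≤ q - 1 ∧ ∃ s : ℤ,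
      (u₁ * p + (v - rs) * q) * r + q < i + 1 + s * p * q ∧
      i + 1 + s * p * q ≤ (u₁ * p + (v - rs) * q) * r + p + q) :
    ∀ u : ℤ, 0 ≤ u → u ≤ q - 1 →
      ((chi p q r i (u * p + v * q) = 1 ↔ u = u₀) ∧
       (chi p q r i (u * p + v * q) = -1 ↔ u = u₁)) := by
  intro u hu0 huq
  have hp0 : (0 : ℤ) < p := by exact_mod_cast hp.pos
  have hcop : IsCoprime (q : ℤ) r :=
    Nat.isCoprime_iff_coprime.mpr ((Nat.coprime_primes hq hr).mpr hqr.ne)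
  obtain ⟨hu₀0, hu₀q, s₀, hs₀⟩ := hu₀
  obtain ⟨hu₁0, hu₁q, s₁, hs₁⟩ := hu₁
  have h₀ : InWindowMod (p * q) p ((u₀ * p + v * q) * r) (i + 1 - q) :=
    ⟨s₀, by linarith, by linarith⟩
  have h₁ : InWindowMod (p * q) p ((u₁ * p + v * q) * r) (i + 1) := by
    obtain ⟨t, ht⟩ := hrs.dvd
    push_cast at ht
    have hshift : (u₁ * p + v * q) * r + t * (p * q) = (u₁ * p + (v - rs) * q) * r + q := by
      linear_combination -(q : ℤ) * ht
    rw [← InWindowMod.add_mul_iff t, hshift]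
    exact ⟨s₁, by linarith, by linarith⟩
  rw [chi_eq_one_iff, chi_eq_neg_one_iff hp.two_le hpq, InWindowMod.add_iff_sub]
  have hu : 0 ≤ u ∧ u < q := ⟨hu0, by omega⟩
  exact ⟨InWindowMod.mul_window_iff hp0 hcop ⟨hu₀0, by omega⟩ h₀ hu,
    InWindowMod.mul_window_iff hp0 hcop ⟨hu₁0, by omega⟩ h₁ hu⟩

/-- Let `p < q < r` be primes and `i` a fixed integer. Suppose `u₀ = [v]` and
`u₁ = [v - r_p*]`, where `[w]` is the unique `u ∈ [0, q-1]` such that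
`(u p + w q) r + q < i + 1 + s p q ≤ (u p + w q) r + p + q` for some `s ∈ ℤ`,
and `rs = r_p*` is the inverse of `r` mod `p` in `[1, p-1]`. Then for `0 ≤ u ≤ q-1`:
(a) `χ_i(up + vq) = 1 ↔ u = [v]`; (b) `χ_i(up + vq) = -1 ↔ u = [v - r_p*]`. -/
theorem stmt_10 (p q r : ℕ) (hp : p.Prime) (hq : q.Prime) (hr : r.Prime)
    (hpq : p < q) (hqr : q < r) (i v : ℤ) (rs : ℕ)
    (hrs1 : 1 ≤ rs) (hrs2 : rs ≤ p - 1) (hrs : r * rs ≡ 1 [MOD p])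
    (u₀ u₁ : ℤ)
    (hu₀ : 0 ≤ u₀ ∧ u₀ ≤ q - 1 ∧ ∃ s : ℤ,
      (u₀ * p + v * q) * r + q < i + 1 + s * p * q ∧
      i + 1 + s * p * q ≤ (u₀ * p + v * q) * r + p + q)
    (hu₁ : 0 ≤ u₁ ∧ u₁ ≤ q - 1 ∧ ∃ s : ℤ,
      (u₁ * p + (v - rs) * q) * r + q < i + 1 + s * p * q ∧
      i + 1 + s * p * q ≤ (u₁ * p + (v - rs) * q) * r + p + q) :
    ∀ u : ℤ, 0 ≤ u → u ≤ q - 1 →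
      ((chi p q r i (u * p + v * q) = 1 ↔ u = u₀) ∧
       (chi p q r i (u * p + v * q) = -1 ↔ u = u₁)) :=
  stmt_10_general p q r hp hq hr hpq hqr i v rs hrs u₀ u₁ hu₀ hu₁
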